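/- Let G = Sp(2r, Q_p), n ∈ N(Q_p), and let x ∈ C(n) = U(Q_p)·n·U(Q_p) ∩ G(Z_p) have two Bruhat decompositions x = b1·n·b2 = b1'·n·b2' with b1, b1', b2, b2' ∈ U(Q_p). Let ψ, ψ' be characters of U(Q_p) trivial on U(Z_p), and suppose ψ(n·u·n^{-1}) = ψ'(u) for all u ∈ ŪU_n(Q_p) := U(Q_p) ∩ n^{-1}U(Q_p)n. Then ψ(b1)·ψ'(b2) = ψ(b1')·ψ'(b2'). -/
import Mathlib


open Matrix

variable (p : ℕ) [Fact p.Prime] (r : ℕ)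

/-- The standard unipotent subgroup `U(ℚ_p)` of `Sp(2r, ℚ_p)`: upper-triangular
unipotent symplectic matrices (indices `Fin r ⊕ Fin r`, `inl` before `inr`). -/
def InU (M : Matrix (Fin r ⊕ Fin r) (Fin r ⊕ Fin r) ℚ_[p]) : Prop :=
  M ∈ Matrix.symplecticGroup (Fin r) ℚ_[p] ∧ (∀ i, M i i = 1) ∧
    ∀ i j : Fin r ⊕ Fin r, Sum.Lex (· < ·) (· < ·) j i → M i j = 0

/-- `U(ℤ_p)`: elements of `U(ℚ_p)` with all entries of norm at most 1. -/
def InUZ (M : Matrix (Fin r ⊕ Fin r) (Fin r ⊕ Fin r) ℚ_[p]) : Prop :=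
  InU p r M ∧ ∀ i j, ‖M i j‖ ≤ 1

/-- A character of `U(ℚ_p)` trivial on `U(ℤ_p)`. -/
def IsCharacterOfU (ψ : Matrix (Fin r ⊕ Fin r) (Fin r ⊕ Fin r) ℚ_[p] → ℂ) : Prop :=
  (∀ a b, InU p r a → InU p r b → ψ (a * b) = ψ a * ψ b) ∧
    ∀ a, InUZ p r a → ψ a = 1

/-- An element of the standard maximal torus of `Sp(2r, ℚ_p)`. -/
def IsTorusElt (M : Matrix (Fin r ⊕ Fin r) (Fin r ⊕ Fin r) ℚ_[p]) : Prop :=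
  M ∈ Matrix.symplecticGroup (Fin r) ℚ_[p] ∧ ∃ d, M = Matrix.diagonal d

/-- Membership in the normalizer `N(ℚ_p)` of the standard maximal torus in `Sp(2r, ℚ_p)`. -/
def IsInNormalizer (n : Matrix (Fin r ⊕ Fin r) (Fin r ⊕ Fin r) ℚ_[p]) : Prop :=
  n ∈ Matrix.symplecticGroup (Fin r) ℚ_[p] ∧
    ∀ d, IsTorusElt p r d → IsTorusElt p r (n * d * n⁻¹) ∧ IsTorusElt p r (n⁻¹ * d * n)

/-- Index function realizing the lex order on `Fin r ⊕ Fin r`. -/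
def sIdx (r : ℕ) : Fin r ⊕ Fin r → ℕ := Sum.elim Fin.val (fun j => r + j.val)

lemma sIdx_inj : Function.Injective (sIdx r) := by
  rintro (a | a) (b | b) h <;>
    simp only [sIdx, Sum.elim_inl, Sum.elim_inr] at h
  · exact congrArg Sum.inl (Fin.ext h)
  · exact absurd h (by have := a.isLt; omega)
  · exact absurd h (by have := b.isLt; omega)
  · exact congrArg Sum.inr (Fin.ext (by omega))

lemma lex_iff_sIdx (i j : Fin r ⊕ Fin r) :
    Sum.Lex (· < ·) (· < ·) j i ↔ sIdx r j < sIdx r i := by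
  rcases i with a | a <;> rcases j with b | b
  · simp only [sIdx, Sum.elim_inl, Sum.lex_inl_inl, Fin.lt_iff_val_lt_val]
  · simp only [sIdx, Sum.elim_inl, Sum.elim_inr, Sum.lex_inr_inl, false_iff, not_lt]
    exact le_trans a.isLt.le (Nat.le_add_right r b.val)
  · simp only [sIdx, Sum.elim_inl, Sum.elim_inr, true_iff, iff_true]
    constructor
    · intro _; exact b.isLt.trans_le (Nat.le_add_right r a.val)
    · intro _; exact Sum.Lex.sep _ _
  · simp only [sIdx, Sum.elim_inr, Sum.lex_inr_inr, Fin.lt_iff_val_lt_val]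
    omega

lemma InU.bt {M : Matrix (Fin r ⊕ Fin r) (Fin r ⊕ Fin r) ℚ_[p]} (h : InU p r M) :
    M.BlockTriangular (sIdx r) := fun i j hij => h.2.2 i j ((lex_iff_sIdx r i j).2 hij)

lemma symp_inv_mem {M : Matrix (Fin r ⊕ Fin r) (Fin r ⊕ Fin r) ℚ_[p]}
    (h : M ∈ Matrix.symplecticGroup (Fin r) ℚ_[p]) :
    M⁻¹ ∈ Matrix.symplecticGroup (Fin r) ℚ_[p] := by
  have := ((⟨M, h⟩ : Matrix.symplecticGroup (Fin r) ℚ_[p])⁻¹).2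
  rwa [SymplecticGroup.coe_inv'] at this

noncomputable def sympInvertible {M : Matrix (Fin r ⊕ Fin r) (Fin r ⊕ Fin r) ℚ_[p]}
    (h : M ∈ Matrix.symplecticGroup (Fin r) ℚ_[p]) : Invertible M :=
  M.invertibleOfIsUnitDet (SymplecticGroup.symplectic_det h)

/-- diagonal of a product of upper-triangular matrices -/
lemma diag_mul {M N : Matrix (Fin r ⊕ Fin r) (Fin r ⊕ Fin r) ℚ_[p]}
    (hM : M.BlockTriangular (sIdx r)) (hN : N.BlockTriangular (sIdx r)) (i : Fin r ⊕ Fin r) :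
    (M * N) i i = M i i * N i i := by
  rw [Matrix.mul_apply]
  refine Finset.sum_eq_single i (fun k _ hk => ?_) (by simp)
  rcases lt_or_gt_of_ne (fun h => hk (sIdx_inj r h) : sIdx r k ≠ sIdx r i) with h | h
  · rw [hM h, zero_mul]
  · rw [hN h, mul_zero]

lemma InU.mul {M N : Matrix (Fin r ⊕ Fin r) (Fin r ⊕ Fin r) ℚ_[p]}
    (hM : InU p r M) (hN : InU p r N) : InU p r (M * N) :=
  ⟨mul_mem hM.1 hN.1,
   fun i => by rw [diag_mul p r (InU.bt p r hM) (InU.bt p r hN), hM.2.1, hN.2.1, one_mul],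
   fun i j hij => (((InU.bt p r hM).mul (InU.bt p r hN))) ((lex_iff_sIdx r i j).1 hij)⟩

lemma InU.inv {M : Matrix (Fin r ⊕ Fin r) (Fin r ⊕ Fin r) ℚ_[p]}
    (hM : InU p r M) : InU p r M⁻¹ := by
  have : Invertible M := sympInvertible p r hM.1
  have hbt : M⁻¹.BlockTriangular (sIdx r) := blockTriangular_inv_of_blockTriangular (InU.bt p r hM)
  refine ⟨symp_inv_mem p r hM.1, fun i => ?_, fun i j hij => hbt ((lex_iff_sIdx r i j).1 hij)⟩
  have h1 : (M⁻¹ * M) i i = 1 := by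
    rw [Matrix.nonsing_inv_mul M (Matrix.isUnit_det_of_invertible M)]; simp
  rw [diag_mul p r hbt (InU.bt p r hM), hM.2.1, mul_one] at h1
  exact h1

lemma InU.one : InU p r 1 :=
  ⟨one_mem _, fun i => Matrix.one_apply_eq i, fun i j hij => Matrix.one_apply_ne
    (fun h => by subst h; exact lt_irrefl _ ((lex_iff_sIdx r i i).1 hij))⟩


lemma char_one {ψ : Matrix (Fin r ⊕ Fin r) (Fin r ⊕ Fin r) ℚ_[p] → ℂ}
    (hψ : IsCharacterOfU p r ψ) : ψ 1 = 1 := by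
  refine hψ.2 1 ⟨InU.one p r, fun i j => ?_⟩
  rcases eq_or_ne i j with h | h
  · subst h; simp [Matrix.one_apply_eq]
  · simp [Matrix.one_apply_ne h]


/-- Well-definedness of the auxiliary Kloosterman summand (Friedberg Prop. 1.3 for
`Sp(2r)`): if `x ∈ C(n)` has two Bruhat decompositions `x = b1 n b2 = b1' n b2'`, and
`ψ(n u n⁻¹) = ψ'(u)` for all `u ∈ U(ℚ_p) ∩ n⁻¹ U(ℚ_p) n`, then
`ψ(b1) ψ'(b2) = ψ(b1') ψ'(b2')`. -/
theorem stmt_16 (hr : 1 ≤ r)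
    (n x b1 b2 b1' b2' : Matrix (Fin r ⊕ Fin r) (Fin r ⊕ Fin r) ℚ_[p])
    (hn : IsInNormalizer p r n)
    (hx : x ∈ Matrix.symplecticGroup (Fin r) ℚ_[p]) (hxZ : ∀ i j, ‖x i j‖ ≤ 1)
    (hb1 : InU p r b1) (hb2 : InU p r b2) (hb1' : InU p r b1') (hb2' : InU p r b2')
    (hdec : x = b1 * n * b2) (hdec' : x = b1' * n * b2')
    (ψ ψ' : Matrix (Fin r ⊕ Fin r) (Fin r ⊕ Fin r) ℚ_[p] → ℂ)
    (hψ : IsCharacterOfU p r ψ) (hψ' : IsCharacterOfU p r ψ')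
    (hcomp : ∀ u, InU p r u → InU p r (n * u * n⁻¹) → ψ (n * u * n⁻¹) = ψ' u) :
    ψ b1 * ψ' b2 = ψ b1' * ψ' b2' := by
  have i1 : Invertible b1 := sympInvertible p r hb1.1
  have i2' : Invertible b2' := sympInvertible p r hb2'.1
  have inn : Invertible n := sympInvertible p r hn.1
  have hb2'i : InU p r b2'⁻¹ := InU.inv p r hb2'
  have hu : InU p r (b2 * b2'⁻¹) := InU.mul p r hb2 hb2'i
  have hγ : InU p r (b1⁻¹ * b1') := InU.mul p r (InU.inv p r hb1) hb1'
  have heq : b1 * n * b2 = b1' * n * b2' := hdec.symm.trans hdec'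
  have key : n * (b2 * b2'⁻¹) * n⁻¹ = b1⁻¹ * b1' := by
    have h2 : b1 * (n * (b2 * b2'⁻¹) * n⁻¹) = b1' := by
      calc b1 * (n * (b2 * b2'⁻¹) * n⁻¹) = b1 * n * b2 * b2'⁻¹ * n⁻¹ := by
            simp only [Matrix.mul_assoc]
        _ = b1' * n * b2' * b2'⁻¹ * n⁻¹ := by rw [heq]
        _ = b1' := by
            rw [Matrix.mul_inv_cancel_right_of_invertible,
              Matrix.mul_inv_cancel_right_of_invertible]
    calc n * (b2 * b2'⁻¹) * n⁻¹ = b1⁻¹ * (b1 * (n * (b2 * b2'⁻¹) * n⁻¹)) := by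
          rw [Matrix.inv_mul_cancel_left_of_invertible]
      _ = b1⁻¹ * b1' := by rw [h2]
  have hψγ : ψ (b1⁻¹ * b1') = ψ' (b2 * b2'⁻¹) := by
    rw [← key]; exact hcomp _ hu (key ▸ hγ)
  have e1 : ψ b1' = ψ b1 * ψ' (b2 * b2'⁻¹) := by
    rw [← hψγ, ← hψ.1 b1 (b1⁻¹ * b1') hb1 hγ, Matrix.mul_inv_cancel_left_of_invertible]
  have e2 : ψ' (b2 * b2'⁻¹) * ψ' b2' = ψ' b2 := by
    rw [← hψ'.1 _ _ hu hb2', Matrix.mul_assoc,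
      Matrix.nonsing_inv_mul b2' (Matrix.isUnit_det_of_invertible b2')]
    rw [Matrix.mul_one]
  rw [e1, mul_assoc, e2]
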